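/- arXiv:1905.04469 — 3 statements merged into one kernel-verified Lean document; each statement's English description precedes it below -/
import Mathlib

section
/- Let a link of length L > 0 have piecewise-constant velocity profile v : ℕ → ℝ with v(I) > 0 for all I, interval duration χ > 0, and traversal time δ(t) defined as the unique d ≥ 0 with ∫_t^{t+d} v(⌊s/χ⌋) ds = L. Then the arrival-time function a(t) = t + δ(t) is nondecreasing: t ≤ t' implies t + δ(t) ≤ t' + δ(t'). (FIFO holds under the time-continuous velocity model with strictly positive velocities.) -/
open MeasureTheory

lemma fifo_aux_integrable (χ : ℝ) (hχ : 0 < χ) (v : ℕ → ℝ) (hv : ∀ I, 0 < v I)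
    (a b : ℝ) : IntervalIntegrable (fun s => v ⌊s / χ⌋.toNat) volume a b := by
  have hmeas : Measurable (fun s : ℝ => v ⌊s / χ⌋.toNat) := by
    have h1 : Measurable fun s : ℝ => s / χ := measurable_id.div_const χ
    exact (measurable_from_top (f := fun z : ℤ => v z.toNat)).comp (Int.measurable_floor.comp h1)
  -- bound on the interval
  set c := max |a| |b| with hc
  set N := ⌊c / χ⌋.toNat + 1 with hN
  obtain ⟨M, hM⟩ : ∃ M, ∀ n ≤ N, v n ≤ M := by
    refine ⟨(Finset.range (N+1)).sup' ⟨0, by simp⟩ v, fun n hn => ?_⟩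
    exact Finset.le_sup' v (Finset.mem_range.mpr (Nat.lt_succ_of_le hn))
  rw [intervalIntegrable_iff]
  apply Measure.integrableOn_of_bounded (measure_Ioc_lt_top).ne
    hmeas.aestronglyMeasurable
  filter_upwards [ae_restrict_mem measurableSet_uIoc] with s hs
  have hsle : s ≤ c := by
    rcases hs with ⟨h1, h2⟩
    calc s ≤ max a b := h2
    _ ≤ c := by
        rcases max_cases a b with ⟨h, _⟩ | ⟨h, _⟩ <;> rw [h] <;>
          [exact le_trans (le_abs_self a) (le_max_left _ _);
           exact le_trans (le_abs_self b) (le_max_right _ _)]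
  have hfloor : ⌊s / χ⌋.toNat ≤ N := by
    have : ⌊s / χ⌋ ≤ ⌊c / χ⌋ := Int.floor_le_floor (by gcongr)
    calc ⌊s / χ⌋.toNat ≤ ⌊c / χ⌋.toNat := Int.toNat_le_toNat this
      _ ≤ N := Nat.le_succ _
  have := hM _ hfloor
  have hpos := (hv ⌊s / χ⌋.toNat).le
  rw [Real.norm_eq_abs, abs_of_nonneg hpos]
  exact this

/-- Proposition 1: FIFO holds in the time-continuous velocity model with strictly
positive velocities: the arrival time function `t + δ t` is nondecreasing. -/
theorem fifo_of_positive_velocities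
    (χ L : ℝ) (hχ : 0 < χ) (hL : 0 < L)
    (v : ℕ → ℝ) (hv : ∀ I, 0 < v I)
    (δ : ℝ → ℝ)
    (hδ : ∀ t, 0 ≤ δ t ∧ (∫ s in t..(t + δ t), v ⌊s / χ⌋.toNat) = L) :
    ∀ t t' : ℝ, t ≤ t' → t + δ t ≤ t' + δ t' := by
  intro t t' htt
  by_contra hcon
  push_neg at hcon
  set f : ℝ → ℝ := fun s => v ⌊s / χ⌋.toNat with hf
  have hint : ∀ a b : ℝ, IntervalIntegrable f volume a b :=
    fun a b => fifo_aux_integrable χ hχ v hv a b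
  obtain ⟨hδt, hIt⟩ := hδ t
  obtain ⟨hδt', hIt'⟩ := hδ t'
  have h1 : t' ≤ t' + δ t' := le_add_of_nonneg_right hδt'
  have h2 : t ≤ t' + δ t' := htt.trans h1
  -- split ∫ t .. t+δt = ∫ t .. t' + ∫ t' .. t'+δt' + ∫ t'+δt' .. t+δt
  have hsplit1 : (∫ s in t..(t' + δ t'), f s) + (∫ s in (t' + δ t')..(t + δ t), f s)
      = ∫ s in t..(t + δ t), f s :=
    intervalIntegral.integral_add_adjacent_intervals (hint _ _) (hint _ _)
  have hsplit2 : (∫ s in t..t', f s) + (∫ s in t'..(t' + δ t'), f s)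
      = ∫ s in t..(t' + δ t'), f s :=
    intervalIntegral.integral_add_adjacent_intervals (hint _ _) (hint _ _)
  have hpos : 0 < ∫ s in (t' + δ t')..(t + δ t), f s := by
    apply intervalIntegral.intervalIntegral_pos_of_pos_on (hint _ _)
    · intro x _; exact hv _
    · exact hcon
  have hnn : 0 ≤ ∫ s in t..t', f s := by
    apply intervalIntegral.integral_nonneg htt
    intro x _; exact (hv _).le
  have key : (∫ s in t..t', f s) + (∫ s in t'..(t' + δ t'), f s)
      + (∫ s in (t' + δ t')..(t + δ t), f s) = L := by
    rw [hsplit2, hsplit1, hIt]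
  linarith [hIt']
end

section
/- Let a link of length L > 0 have piecewise-constant velocity profile v : ℕ → ℝ with v(I) ≥ 0 for all I (zero velocities, i.e. waiting, allowed), interval duration χ > 0. For a departure time t, define δ(t) as the infimum of durations d ≥ 0 with ∫_t^{t+d} v ds ≥ L, provided such d exists. Then for any two departure times t ≤ t' for which δ(t) and δ(t') are both defined, t + δ(t) ≤ t' + δ(t'). (FIFO is preserved even when zero velocities are permitted.) -/
open MeasureTheory

lemma measurable_speed (χ : ℝ) (v : ℕ → ℝ) :
    Measurable (fun s : ℝ => v ⌊s / χ⌋.toNat) := by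
  have h1 : Measurable (fun s : ℝ => (⌊s / χ⌋ : ℤ)) :=
    Int.measurable_floor.comp (measurable_id.div_const χ)
  exact (measurable_from_top (f := fun n : ℤ => v n.toNat)).comp h1

lemma integrable_speed (χ : ℝ) (hχ : 0 < χ) (v : ℕ → ℝ) (hv : ∀ I, 0 ≤ v I)
    (a b : ℝ) : IntervalIntegrable (fun s : ℝ => v ⌊s / χ⌋.toNat) volume a b := by
  set c := max a b
  set N : ℕ := ⌊c / χ⌋.toNat
  set C : ℝ := ∑ I ∈ Finset.range (N + 1), v I with hC
  have hbound : ∀ s ∈ Set.uIoc a b, ‖v ⌊s / χ⌋.toNat‖ ≤ C := by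
    intro s hs
    have hs' : s ≤ c := hs.2
    have hdiv : s / χ ≤ c / χ := by gcongr
    have hmem : ⌊s / χ⌋.toNat ∈ Finset.range (N + 1) := by
      simp only [Finset.mem_range, Nat.lt_succ_iff, N]
      exact Int.toNat_le_toNat (Int.floor_le_floor hdiv)
    have := Finset.single_le_sum (f := v) (fun i _ => hv i) hmem
    rw [Real.norm_eq_abs, abs_of_nonneg (hv _)]
    exact this
  have hmeas := (measurable_speed χ v).aestronglyMeasurable (μ := volume)
  rw [intervalIntegrable_iff]
  exact Measure.integrableOn_of_bounded measure_Ioc_lt_top.ne hmeas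
    (ae_restrict_of_forall_mem measurableSet_uIoc hbound)

/-- Proposition 2: FIFO is preserved even when zero velocities (waiting) are allowed.
Here `δ t = sInf {d ≥ 0 | ∫_t^{t+d} v ≥ L}` whenever this set is nonempty. -/
theorem fifo_with_waiting_allowed
    (χ L : ℝ) (hχ : 0 < χ) (hL : 0 < L)
    (v : ℕ → ℝ) (hv : ∀ I, 0 ≤ v I)
    (t t' : ℝ) (htt' : t ≤ t')
    (hdef : ({d : ℝ | 0 ≤ d ∧ L ≤ ∫ s in t..(t + d), v ⌊s / χ⌋.toNat}).Nonempty)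
    (hdef' : ({d : ℝ | 0 ≤ d ∧ L ≤ ∫ s in t'..(t' + d), v ⌊s / χ⌋.toNat}).Nonempty) :
    t + sInf {d : ℝ | 0 ≤ d ∧ L ≤ ∫ s in t..(t + d), v ⌊s / χ⌋.toNat} ≤
      t' + sInf {d : ℝ | 0 ≤ d ∧ L ≤ ∫ s in t'..(t' + d), v ⌊s / χ⌋.toNat} := by
  set f : ℝ → ℝ := fun s => v ⌊s / χ⌋.toNat with hf
  set S := {d : ℝ | 0 ≤ d ∧ L ≤ ∫ s in t..(t + d), f s} with hS
  set S' := {d : ℝ | 0 ≤ d ∧ L ≤ ∫ s in t'..(t' + d), f s} with hS'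
  have hbdd : BddBelow S := ⟨0, fun d hd => hd.1⟩
  have key : ∀ d' ∈ S', sInf S ≤ t' + d' - t := by
    intro d' hd'
    apply csInf_le hbdd
    constructor
    · linarith [hd'.1]
    · have h1 : (∫ s in t..t', f s) + (∫ s in t'..(t' + d'), f s) =
          ∫ s in t..(t' + d'), f s :=
        intervalIntegral.integral_add_adjacent_intervals
          (integrable_speed χ hχ v hv t t') (integrable_speed χ hχ v hv t' (t' + d'))
      have h2 : 0 ≤ ∫ s in t..t', f s :=
        intervalIntegral.integral_nonneg htt' (fun s _ => hv _)
      have h3 : t + (t' + d' - t) = t' + d' := by ring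
      rw [h3]
      calc L ≤ ∫ s in t'..(t' + d'), f s := hd'.2
        _ ≤ ∫ s in t..(t' + d'), f s := by linarith
  have h4 : t + sInf S - t' ≤ sInf S' := by
    apply le_csInf hdef'
    intro d' hd'
    linarith [key d' hd']
  linarith
end

section
/- In the time-continuous velocity model with strictly positive velocities, if two traversals of the same link of length L start at times t ≤ t' and finish at the same arrival time a = t + δ(t) = t' + δ(t'), with t < t', then the total distance covered during the time window [t, t'] by the first traversal is zero, which contradicts strict positivity of velocities; hence equal arrival times force t = t'. Equivalently, the arrival-time function is strictly increasing. -/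
open MeasureTheory

/-- Key lemma: if `f > 0` everywhere, and two interval integrals both equal
`L > 0`, with the second interval nested strictly inside the first on the left,
we get a contradiction. -/
lemma no_nested_equal_integrals (L : ℝ) (hL : 0 < L) (f : ℝ → ℝ)
    (hf : ∀ s, 0 < f s) {t t' a' a : ℝ}
    (h1 : t < t') (h2 : t' ≤ a') (h3 : a' ≤ a)
    (hta : (∫ s in t..a, f s) = L) (ht'a' : (∫ s in t'..a', f s) = L) :
    False := by
  have hta' : t ≤ a := le_trans (le_trans h1.le h2) h3
  have hint : IntervalIntegrable f volume t a := by
    by_contra h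
    rw [intervalIntegral.integral_undef h] at hta
    linarith
  have hsub : ∀ {c d : ℝ}, t ≤ c → c ≤ d → d ≤ a →
      IntervalIntegrable f volume c d := by
    intro c d hc hcd hd
    refine hint.mono_set ?_
    rw [Set.uIcc_of_le hcd, Set.uIcc_of_le hta']
    exact Set.Icc_subset_Icc hc hd
  have i1 : IntervalIntegrable f volume t t' := hsub le_rfl h1.le (le_trans h2 h3)
  have i2 : IntervalIntegrable f volume t' a' := hsub h1.le h2 h3
  have i3 : IntervalIntegrable f volume a' a := hsub (le_trans h1.le h2) h3 le_rfl
  have hsplit : (∫ s in t..t', f s) + (∫ s in t'..a', f s) + (∫ s in a'..a, f s)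
      = ∫ s in t..a, f s := by
    rw [intervalIntegral.integral_add_adjacent_intervals i1 i2]
    exact intervalIntegral.integral_add_adjacent_intervals (i1.trans i2) i3
  have hpos : 0 < ∫ s in t..t', f s :=
    intervalIntegral.intervalIntegral_pos_of_pos_on i1 (fun x _ => hf x) h1
  have hnn : 0 ≤ ∫ s in a'..a, f s :=
    intervalIntegral.integral_nonneg h3 (fun x _ => (hf x).le)
  rw [hta, ht'a'] at hsplit
  linarith

/-- With strictly positive velocities, equal arrival times force equal departure
times; equivalently, the arrival-time function `t + δ t` is strictly increasing. -/
theorem arrival_strict_mono_of_positive_velocities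
    (χ L : ℝ) (hχ : 0 < χ) (hL : 0 < L)
    (v : ℕ → ℝ) (hv : ∀ I, 0 < v I)
    (δ : ℝ → ℝ)
    (hδ : ∀ t, 0 ≤ δ t ∧ (∫ s in t..(t + δ t), v ⌊s / χ⌋.toNat) = L) :
    (∀ t t' : ℝ, t + δ t = t' + δ t' → t = t') ∧
      StrictMono (fun t => t + δ t) := by
  have key : ∀ t t' : ℝ, t < t' → t' + δ t' ≤ t + δ t → False := by
    intro t t' h1 h2
    exact no_nested_equal_integrals L hL _ (fun s => hv _) h1
      (le_add_of_nonneg_right (hδ t').1) h2 (hδ t).2 (hδ t').2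
  constructor
  · intro t t' h
    rcases lt_trichotomy t t' with ht | ht | ht
    · exact absurd (key t t' ht h.ge) not_false
    · exact ht
    · exact absurd (key t' t ht h.le) not_false
  · intro t t' h
    by_contra hc
    exact key t t' h (not_lt.mp hc)
end
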